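/- Transfer is overflow-safe: if Sum(bals) ≤ tot ≤ MaxInt and amt ≤ bals s, then for bals1 = update bals s (bals s − amt), the addition bals1 r + amt ≤ MaxInt for any recipient r. -/
import Mathlib

theorem stmt_6 {K : Type*} [DecidableEq K] (bals : K →₀ ℕ) (tot amt MaxInt : ℕ) (s r : K)
    (hinv : ∑ k ∈ bals.support, bals k ≤ tot) (htot : tot ≤ MaxInt)
    (hamt : amt ≤ bals s) :
    (Finsupp.update bals s (bals s - amt)) r + amt ≤ MaxInt := by
  have hle : ∀ k : K, bals k ≤ ∑ k ∈ bals.support, bals k := by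
    intro k
    by_cases h : k ∈ bals.support
    · exact Finset.single_le_sum (fun _ _ => Nat.zero_le _) h
    · simp [Finsupp.notMem_support_iff.mp h]
  rcases eq_or_ne r s with rfl | hrs
  · simp only [Finsupp.coe_update, Function.update_self]
    have := hle r
    omega
  · rw [Finsupp.coe_update, Function.update_of_ne hrs]
    have hpair : bals r + bals s ≤ ∑ k ∈ bals.support, bals k := by
      by_cases hr : r ∈ bals.support
      · by_cases hs : s ∈ bals.support
        · have := Finset.add_sum_erase _ bals hr
          have h2 : bals s ≤ ∑ k ∈ bals.support.erase r, bals k :=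
            Finset.single_le_sum (fun _ _ => Nat.zero_le _)
              (Finset.mem_erase.mpr ⟨hrs.symm, hs⟩)
          omega
        · have := hle r
          simp [Finsupp.notMem_support_iff.mp hs] at *
          omega
      · have := hle s
        simp [Finsupp.notMem_support_iff.mp hr]
        omega
    omega
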